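/- arXiv:math/0406595 — 2 statements merged into one kernel-verified Lean document; each statement's English description precedes it below -/
import Mathlib

section
/- Let dz_ℓ be a dead-zone function as above and suppose |θ_i| ≤ ℓ for each component of θ ∈ ℝ^q. Then for any δ > √q·(2ℓ+1) there exists c₁ > 0 such that for all θ̃ ∈ ℝ^q with |θ̃| ≥ δ, one has 2·θ̃ᵀ dzv_ℓ(θ̃ + θ) ≥ c₁·|θ̃|². -/
/-- deadzone quadratic lower bound outside a ball of radius
`δ > √q (2ℓ+1)`. -/
theorem stmt_1 (q : ℕ) (ℓ : ℝ) (hℓ : 0 < ℓ) (dz : ℝ → ℝ)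
    (hdz0 : ∀ x : ℝ, |x| ≤ ℓ → dz x = 0)
    (hdz1 : ∀ x : ℝ, ℓ + 1 ≤ |x| → dz x = x)
    (hdzsign : ∀ x : ℝ, 0 ≤ x * dz x)
    (hdzbnd : ∀ x : ℝ, |dz x| ≤ |x|)
    (θ : Fin q → ℝ) (hθ : ∀ i, |θ i| ≤ ℓ)
    (δ : ℝ) (hδ : Real.sqrt q * (2 * ℓ + 1) < δ) :
    ∃ c₁ > 0, ∀ θt : EuclideanSpace ℝ (Fin q), δ ≤ ‖θt‖ →
      c₁ * ‖θt‖ ^ 2 ≤ 2 * ∑ i, θt i * dz (θt i + θ i) := by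
  have hsq : Real.sqrt q * (2 * ℓ + 1) ≥ 0 := by positivity
  have hδ0 : 0 < δ := lt_of_le_of_lt hsq hδ
  have hKδ : (q : ℝ) * (2 * ℓ + 1) ^ 2 < δ ^ 2 := by
    have h := mul_self_lt_mul_self hsq hδ
    have : Real.sqrt q * Real.sqrt q = q := Real.mul_self_sqrt (Nat.cast_nonneg q)
    nlinarith
  set K : ℝ := (q : ℝ) * (2 * ℓ + 1) ^ 2 with hK
  have hK0 : 0 ≤ K := by positivity
  refine ⟨1 - K / δ ^ 2, by
    have : K / δ ^ 2 < 1 := (div_lt_one (by positivity)).2 hKδ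
    linarith, ?_⟩
  intro θt hθt
  -- pointwise nonnegativity
  have hpos : ∀ i, 0 ≤ θt i * dz (θt i + θ i) := by
    intro i
    set x := θt i + θ i with hx
    by_cases h0 : dz x = 0
    · simp [h0]
    · have hxℓ : ℓ < |x| := by
        by_contra h
        exact h0 (hdz0 x (le_of_not_gt h))
      rcases lt_or_ge 0 x with hxp | hxn
      · have hdzp : 0 ≤ dz x := nonneg_of_mul_nonneg_right (by
          have := hdzsign x; linarith [hdzsign x]) hxp
        have hxgt : ℓ < x := by rwa [abs_of_pos hxp] at hxℓ
        have : 0 ≤ θt i := by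
          have := hθ i
          have := abs_le.1 (hθ i)
          nlinarith
        positivity
      · have hxneg : x < -ℓ := by
          rcases hxn.lt_or_eq with h | h
          · rw [abs_of_neg h] at hxℓ; linarith
          · exfalso; apply h0; apply hdz0; rw [h]; simpa using hℓ.le
        have hdzn : dz x ≤ 0 := by
          by_contra h
          push_neg at h
          have := hdzsign x
          nlinarith
        have hθtn : θt i ≤ 0 := by
          have := abs_le.1 (hθ i)
          nlinarith
        nlinarith [mul_nonneg (neg_nonneg.2 hθtn) (neg_nonneg.2 hdzn)]
  -- pointwise quadratic bound for large components
  have hbig : ∀ i, 2 * ℓ + 1 ≤ |θt i| →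
      θt i ^ 2 ≤ 2 * (θt i * dz (θt i + θ i)) := by
    intro i hi
    have habs : ℓ + 1 ≤ |θt i + θ i| := by
      have h1 := abs_le.1 (hθ i)
      have h2 := abs_sub_abs_le_abs_sub (θt i) (-(θ i))
      have : |θt i + θ i| = |θt i - -(θ i)| := by ring_nf
      rw [this]
      have : |(-(θ i))| ≤ ℓ := by rw [abs_neg]; exact hθ i
      linarith
    rw [hdz1 _ habs]
    have h1 := abs_le.1 (hθ i)
    have h2 : θt i * θ i ≥ -(|θt i| * ℓ) := by
      have := abs_mul (θt i) (θ i)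
      have h3 : |θt i * θ i| ≤ |θt i| * ℓ :=
        (abs_mul (θt i) (θ i)) ▸ mul_le_mul_of_nonneg_left (hθ i) (abs_nonneg _)
      have := abs_le.1 h3
      linarith
    have h4 : |θt i| * |θt i| = θt i ^ 2 := by
      rw [← abs_mul, abs_mul_self]; ring
    nlinarith [abs_nonneg (θt i)]
  -- sum manipulations
  have hnorm : ‖θt‖ ^ 2 = ∑ i, θt i ^ 2 := by
    rw [EuclideanSpace.norm_eq, Real.sq_sqrt (by positivity)]
    congr 1; ext i; rw [Real.norm_eq_abs, sq_abs]
  set f : Fin q → ℝ := fun i => if 2 * ℓ + 1 ≤ |θt i| then θt i ^ 2 else 0 with hf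
  have hsum1 : ∑ i, f i ≤ 2 * ∑ i, θt i * dz (θt i + θ i) := by
    rw [Finset.mul_sum]
    apply Finset.sum_le_sum
    intro i _
    by_cases h : 2 * ℓ + 1 ≤ |θt i|
    · simp only [hf, if_pos h]; exact hbig i h
    · simp only [hf, if_neg h]; have := hpos i; linarith
  have hsum2 : ∑ i, θt i ^ 2 - K ≤ ∑ i, f i := by
    have : ∑ i, (θt i ^ 2 - f i) ≤ ∑ _i : Fin q, (2 * ℓ + 1) ^ 2 := by
      apply Finset.sum_le_sum
      intro i _
      by_cases h : 2 * ℓ + 1 ≤ |θt i|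
      · simp only [hf, if_pos h]; nlinarith
      · simp only [hf, if_neg h]
        push_neg at h
        have := sq_abs (θt i)
        nlinarith [abs_nonneg (θt i)]
    rw [Finset.sum_sub_distrib, Finset.sum_const, Finset.card_univ, Fintype.card_fin,
      nsmul_eq_mul] at this
    simp only [hK]
    linarith
  have hN : δ ^ 2 ≤ ‖θt‖ ^ 2 := by nlinarith [norm_nonneg θt]
  have hfinal : (1 - K / δ ^ 2) * ‖θt‖ ^ 2 ≤ ‖θt‖ ^ 2 - K := by
    have hd2 : 0 < δ ^ 2 := by positivity
    have : K / δ ^ 2 * δ ^ 2 = K := div_mul_cancel₀ K (ne_of_gt hd2)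
    nlinarith [div_nonneg hK0 (le_of_lt hd2)]
  calc (1 - K / δ ^ 2) * ‖θt‖ ^ 2 ≤ ‖θt‖ ^ 2 - K := hfinal
    _ ≤ ∑ i, f i := by rw [hnorm]; exact hsum2
    _ ≤ 2 * ∑ i, θt i * dz (θt i + θ i) := hsum1
end

section
/- Let A be the d×d shift matrix (1's on the superdiagonal), C = (1 0 ⋯ 0) ∈ ℝ^{1×d}, b = col(1, b₂, …, b_d) ∈ ℝ^d, and K = Ab + λb with λ > 0. Write the first coordinate χ₁ and let χ₂ ∈ ℝ^{d-1} be the remaining coordinates, ζ = b̂χ₁ + χ₂ with b̂ = −col(b₂,…,b_d). Then under the linear change of coordinates (χ₁, χ₂) ↦ (χ₁, ζ), the matrix A − KC becomes block lower-triangular with the (1,1) entry −λ, the (1,2) block equal to the row ĉ = (1 0 ⋯ 0) (of length d−1), and the (2,2) block equal to the companion-type matrix F with first column −col(b₂,…,b_d) and identity shifted in the remaining columns; i.e., the ζ-dynamics matrix is F, independent of λ. -/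
/-!
The matrix `T` is unipotent lower triangular, so it is invertible and the claim reduces to
`T (A - K C) = Mt T`, which is checked on vectors `(χ₁, χ₂)`. Write `β` for the tail of `b`, so
that `ζ = χ₂ - χ₁ β`. The gain `K = A b + λ b` contributes `-λ χ₁` to `χ̇₁` and `-λ χ₁ β` to `χ̇₂`;
since `ζ̇ = χ̇₂ - χ̇₁ β`, the two cancel and `ζ̇ = F ζ` with `F = S - β ĉ`, `S` the shift.
-/

open Matrix

section

variable {R : Type*}

def shiftMatrix [Zero R] [One R] (n : ℕ) : Matrix (Fin n) (Fin n) R :=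
  of fun i j => if (i : ℕ) + 1 = j then 1 else 0

/-- The row `ĉ = (1 0 ⋯ 0)`, stated via `(j : ℕ) = 0` since `Fin n` has no `0` when `n = 0`. -/
def headVec [Zero R] [One R] (n : ℕ) : Fin n → R :=
  fun j => if (j : ℕ) = 0 then 1 else 0

def coordChange [Zero R] [One R] [Neg R] {n : ℕ} (b : Fin (n + 1) → R) :
    Matrix (Fin (n + 1)) (Fin (n + 1)) R :=
  of fun i j => if i = j then 1 else if j = 0 then -b i else 0

def observerNormalForm [Zero R] [One R] [Neg R] {n : ℕ} (lam : R)
    (F : Matrix (Fin n) (Fin n) R) : Matrix (Fin (n + 1)) (Fin (n + 1)) R :=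
  of fun i j =>
    if hi : i = 0 then (if (j : ℕ) = 0 then -lam else if (j : ℕ) = 1 then 1 else 0)
    else if hj : j = 0 then 0 else F (i.pred hi) (j.pred hj)

variable [CommRing R] {n : ℕ}

theorem shiftMatrix_succ_mulVec_cons (a : R) (v : Fin n → R) :
    shiftMatrix (n + 1) *ᵥ Fin.cons a v = Fin.cons (headVec n ⬝ᵥ v) (shiftMatrix n *ᵥ v) := by
  ext i
  induction i using Fin.cases <;>
    simp [shiftMatrix, headVec, mulVec, dotProduct, Fin.sum_univ_succ, eq_comm]

theorem shiftMatrix_sub_vecMulVec_single_mulVec_cons (K : Fin (n + 1) → R) (a : R)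
    (v : Fin n → R) :
    (shiftMatrix (n + 1) - vecMulVec K (Pi.single 0 1)) *ᵥ Fin.cons a v =
      Fin.cons (headVec n ⬝ᵥ v - a * K 0) (shiftMatrix n *ᵥ v - a • Fin.tail K) := by
  rw [sub_mulVec, vecMulVec_mulVec, shiftMatrix_succ_mulVec_cons]
  ext i
  induction i using Fin.cases <;> simp [mul_comm, Fin.tail]

theorem shiftMatrix_sub_vecMulVec_headVec_mulVec (β v : Fin n → R) :
    (shiftMatrix n - vecMulVec β (headVec n)) *ᵥ v =
      shiftMatrix n *ᵥ v - (headVec n ⬝ᵥ v) • β := by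
  rw [sub_mulVec, vecMulVec_mulVec, op_smul_eq_smul]

theorem coordChange_mulVec_cons (b : Fin (n + 1) → R) (a : R) (v : Fin n → R) :
    coordChange b *ᵥ Fin.cons a v = Fin.cons a (v - a • Fin.tail b) := by
  ext i
  induction i using Fin.cases <;>
    simp [coordChange, mulVec, dotProduct, Fin.sum_univ_succ, Fin.tail,
      fun k : Fin n => (Fin.succ_ne_zero k).symm, sub_eq_add_neg, add_comm, mul_comm]

theorem det_coordChange (b : Fin (n + 1) → R) : (coordChange b).det = 1 := by
  rw [det_of_isLowerTriangular _ fun i j hij => ?_]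
  · simp [coordChange]
  · have hij : i < j := hij
    simp [coordChange, hij.ne, ((Fin.zero_le i).trans_lt hij).ne']

theorem coordChange_mulVec_errorDynamics (b : Fin (n + 1) → R) (hb : b 0 = 1) (lam a : R)
    (v : Fin n → R) :
    coordChange b *ᵥ
        ((shiftMatrix (n + 1) - vecMulVec (shiftMatrix (n + 1) *ᵥ b + lam • b) (Pi.single 0 1)) *ᵥ
          Fin.cons a v) =
      Fin.cons (-lam * a + headVec n ⬝ᵥ (v - a • Fin.tail b))
        ((shiftMatrix n - vecMulVec (Fin.tail b) (headVec n)) *ᵥ (v - a • Fin.tail b)) := by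
  rw [shiftMatrix_sub_vecMulVec_single_mulVec_cons, coordChange_mulVec_cons,
    shiftMatrix_sub_vecMulVec_headVec_mulVec, ← Fin.cons_self_tail b, hb,
    shiftMatrix_succ_mulVec_cons]
  simp only [Pi.add_apply, Pi.smul_apply, Fin.cons_zero, Fin.tail_def, Fin.cons_succ,
    mulVec_sub, mulVec_smul, dotProduct_sub, dotProduct_smul]
  congr 1
  · simp only [smul_eq_mul]
    ring
  · ext i
    simp only [Pi.sub_apply, Pi.smul_apply, smul_eq_mul]
    ring

theorem observerNormalForm_mulVec_cons (lam : R) (F : Matrix (Fin n) (Fin n) R) (a : R)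
    (v : Fin n → R) :
    observerNormalForm lam F *ᵥ Fin.cons a v = Fin.cons (-lam * a + headVec n ⬝ᵥ v) (F *ᵥ v) := by
  ext i
  induction i using Fin.cases <;>
    simp [observerNormalForm, mulVec, dotProduct, Fin.sum_univ_succ, headVec, mul_comm]

end

theorem stmt_9_general (n : ℕ) (b : Fin (n + 1) → ℝ) (hb : b 0 = 1) (lam : ℝ)
    -- shift matrix A and output row C (as a vector c)
    (A : Matrix (Fin (n + 1)) (Fin (n + 1)) ℝ)
    (hA : A = Matrix.of fun i j : Fin (n + 1) => if (i : ℕ) + 1 = (j : ℕ) then 1 else 0)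
    (c : Fin (n + 1) → ℝ) (hc : c = fun j => if j = 0 then 1 else 0)
    -- K = Ab + λb
    (K : Fin (n + 1) → ℝ) (hK : K = A.mulVec b + lam • b)
    -- the coordinate change ζ = b̂χ₁ + χ₂, b̂ = −(b₂,…,b_d)
    (T : Matrix (Fin (n + 1)) (Fin (n + 1)) ℝ)
    (hT : T = Matrix.of fun i j : Fin (n + 1) => if i = j then 1 else if j = 0 then -(b i) else 0)
    -- the companion-type matrix F
    (F : Matrix (Fin n) (Fin n) ℝ)
    (hF : F = Matrix.of fun i j : Fin n =>
      if (j : ℕ) = 0 then -(b i.succ) else if (i : ℕ) + 1 = (j : ℕ) then 1 else 0)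
    -- the transformed matrix
    (Mt : Matrix (Fin (n + 1)) (Fin (n + 1)) ℝ)
    (hMt : Mt = Matrix.of fun i j : Fin (n + 1) =>
      if hi : i = 0 then (if (j : ℕ) = 0 then -lam else if (j : ℕ) = 1 then 1 else 0)
      else if hj : j = 0 then 0 else F (i.pred hi) (j.pred hj)) :
    IsUnit T.det ∧ T * (A - Matrix.vecMulVec K c) * T⁻¹ = Mt := by
  have hA' : A = shiftMatrix (n + 1) := hA
  have hT' : T = coordChange b := hT
  have hc' : c = Pi.single 0 1 := by
    subst hc
    ext j
    simp [Pi.single_apply]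
  have hF' : F = shiftMatrix n - vecMulVec (Fin.tail b) (headVec n) := by
    subst hF
    ext i j
    simp only [of_apply, shiftMatrix, Matrix.sub_apply, vecMulVec_apply, Fin.tail, headVec,
      mul_ite, mul_one, mul_zero]
    split_ifs <;> simp_all
  have hMt' : Mt = observerNormalForm lam F := hMt
  have hunit : IsUnit T.det := by simp [hT', det_coordChange]
  have hconj : T * (A - vecMulVec K c) = Mt * T := by
    refine ext_iff_mulVec.2 fun x => ?_
    induction x using Fin.consCases with
    | cons a v =>
      rw [← mulVec_mulVec, ← mulVec_mulVec, hK, hA', hT', hc',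
        coordChange_mulVec_errorDynamics b hb, coordChange_mulVec_cons, hMt',
        observerNormalForm_mulVec_cons, hF']
  exact ⟨hunit, by rw [hconj, mul_nonsing_inv_cancel_right _ _ hunit]⟩

/-- with `K = Ab + λb`, the change of coordinates
`(χ₁, χ₂) ↦ (χ₁, ζ)`, `ζ = b̂χ₁ + χ₂`, transforms `A − KC` into the matrix whose
first row is `(−λ, 1, 0, …, 0)`, whose first column below the diagonal is zero,
and whose lower-right `(d−1)×(d−1)` block is the companion-type matrix `F`
(independent of `λ`). Here `d = n+1`. -/
theorem stmt_9 (n : ℕ) (b : Fin (n + 1) → ℝ) (hb : b 0 = 1) (lam : ℝ) (hlam : 0 < lam)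
    -- shift matrix A and output row C (as a vector c)
    (A : Matrix (Fin (n + 1)) (Fin (n + 1)) ℝ)
    (hA : A = Matrix.of fun i j : Fin (n + 1) => if (i : ℕ) + 1 = (j : ℕ) then 1 else 0)
    (c : Fin (n + 1) → ℝ) (hc : c = fun j => if j = 0 then 1 else 0)
    -- K = Ab + λb
    (K : Fin (n + 1) → ℝ) (hK : K = A.mulVec b + lam • b)
    -- the coordinate change ζ = b̂χ₁ + χ₂, b̂ = −(b₂,…,b_d)
    (T : Matrix (Fin (n + 1)) (Fin (n + 1)) ℝ)
    (hT : T = Matrix.of fun i j : Fin (n + 1) => if i = j then 1 else if j = 0 then -(b i) else 0)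
    -- the companion-type matrix F
    (F : Matrix (Fin n) (Fin n) ℝ)
    (hF : F = Matrix.of fun i j : Fin n =>
      if (j : ℕ) = 0 then -(b i.succ) else if (i : ℕ) + 1 = (j : ℕ) then 1 else 0)
    -- the transformed matrix
    (Mt : Matrix (Fin (n + 1)) (Fin (n + 1)) ℝ)
    (hMt : Mt = Matrix.of fun i j : Fin (n + 1) =>
      if hi : i = 0 then (if (j : ℕ) = 0 then -lam else if (j : ℕ) = 1 then 1 else 0)
      else if hj : j = 0 then 0 else F (i.pred hi) (j.pred hj)) :
    IsUnit T.det ∧ T * (A - Matrix.vecMulVec K c) * T⁻¹ = Mt :=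
  stmt_9_general n b hb lam A hA c hc K hK T hT F hF Mt hMt
end
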